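/- Let N ≥ 1, ħ ≠ 0 real, V: ℝ² → ℝ smooth, and f_{j,k}: ℝ² → ℝ smooth for 0 ≤ k ≤ N, 0 ≤ j ≤ N−k. Define X^e ψ = (1/2) Σ_{k even} Σ_{j} [ f_{j,k}·(p̂₁^j p̂₂^{N−k−j} ψ) + p̂₁^j p̂₂^{N−k−j}(f_{j,k}·ψ) ] and X^o ψ the analogous sum over odd k, so X = X^e + X^o. If X commutes with Ĥ (i.e., X(Ĥψ) = Ĥ(Xψ) for all smooth ψ: ℝ² → ℂ), then X^e and X^o each commute with Ĥ; i.e., the parts of X whose differential order has fixed parity are separately integrals of motion. -/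

import Mathlib

/-!
Complex conjugation `C ψ = ψ̄` commutes with `Ĥ` because `V` is real, and anticommutes with
`p̂₁` and `p̂₂`. The `k`-th summand of `X` has degree `N - k` in the momenta, so `C` multiplies
it by `(-1)^(N-k)`, and `(-1)^N C X C = X^e - X^o`. Hence `X^e - X^o` commutes with `Ĥ` along
with `X = X^e + X^o`, and so do half their sum and half their difference.
-/

noncomputable section

/-- Partial derivative with respect to `x` of a complex-valued function on `ℝ²`. -/
def pdxC (f : ℝ × ℝ → ℂ) : ℝ × ℝ → ℂ := fun q => fderiv ℝ f q (1, 0)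

/-- Partial derivative with respect to `y` of a complex-valued function on `ℝ²`. -/
def pdyC (f : ℝ × ℝ → ℂ) : ℝ × ℝ → ℂ := fun q => fderiv ℝ f q (0, 1)

/-- The momentum operator `p̂₁ψ = −iħ ∂ψ/∂x`. -/
def P1 (hbar : ℝ) (ψ : ℝ × ℝ → ℂ) : ℝ × ℝ → ℂ := fun q =>
  -Complex.I * (hbar : ℂ) * pdxC ψ q

/-- The momentum operator `p̂₂ψ = −iħ ∂ψ/∂y`. -/
def P2 (hbar : ℝ) (ψ : ℝ × ℝ → ℂ) : ℝ × ℝ → ℂ := fun q =>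
  -Complex.I * (hbar : ℂ) * pdyC ψ q

/-- The quantum Hamiltonian `Ĥψ = −ħ²(ψ_xx + ψ_yy) + V ψ`. -/
def Hop (hbar : ℝ) (V : ℝ × ℝ → ℝ) (ψ : ℝ × ℝ → ℂ) : ℝ × ℝ → ℂ := fun q =>
  -(hbar : ℂ) ^ 2 * (pdxC (pdxC ψ) q + pdyC (pdyC ψ) q) + (V q : ℂ) * ψ q

/-- The sub-sum of the symmetrized quantum integral with `k` ranging over a set `s`:
`(1/2) Σ_{k ∈ s} Σ_j [f_{j,k}·(p̂₁^j p̂₂^{N−k−j} ψ) + p̂₁^j p̂₂^{N−k−j}(f_{j,k}·ψ)]`. -/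
def XopS (N : ℕ) (hbar : ℝ) (f : ℕ → ℕ → ℝ × ℝ → ℝ) (s : Finset ℕ)
    (ψ : ℝ × ℝ → ℂ) : ℝ × ℝ → ℂ := fun q =>
  (1 / 2) * ∑ k ∈ s, ∑ j ∈ Finset.range (N - k + 1),
    ((f j k q : ℂ) * ((P1 hbar)^[j] ((P2 hbar)^[N - k - j] ψ)) q +
      ((P1 hbar)^[j] ((P2 hbar)^[N - k - j] (fun p => (f j k p : ℂ) * ψ p))) q)

open Function

section Signs

variable {R M : Type*} [Ring R] [AddCommGroup M] [Module R M]

lemma map_neg_one_pow_smul {T : M → M} (hT : ∀ x, T (-x) = -T x) (n : ℕ) (x : M) :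
    T ((-1 : R) ^ n • x) = (-1 : R) ^ n • T x := by
  rcases neg_one_pow_eq_or R n with h | h <;> simp [h, hT]

lemma neg_one_pow_sub_of_even {N k : ℕ} (hk : k ≤ N) (he : Even k) :
    (-1 : R) ^ (N - k) = (-1) ^ N := by
  conv_rhs => rw [← Nat.sub_add_cancel hk, pow_add, he.neg_one_pow, mul_one]

lemma neg_one_pow_sub_of_odd {N k : ℕ} (hk : k ≤ N) (ho : Odd k) :
    (-1 : R) ^ (N - k) = -(-1) ^ N := by
  conv_rhs => rw [← Nat.sub_add_cancel hk, pow_add, ho.neg_one_pow, mul_neg_one, neg_neg]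

variable [Star M]

lemma iterate_neg_one_pow_smul_star {T : M → M} (hneg : ∀ x, T (-x) = -T x)
    (hstar : ∀ x, T (star x) = -star (T x)) (n k : ℕ) (x : M) :
    T^[n] ((-1 : R) ^ k • star x) = (-1 : R) ^ (n + k) • star (T^[n] x) := by
  refine Semiconj.iterate_left (g := fun k x => (-1 : R) ^ k • star x) (fun k y => ?_) n k x
  simp only [map_neg_one_pow_smul hneg, hstar, pow_succ, mul_neg_one, neg_smul, smul_neg]

end Signs

lemma ContDiff.star {E F : Type*} [NormedAddCommGroup E] [NormedSpace ℝ E]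
    [NormedAddCommGroup F] [NormedSpace ℝ F] [StarAddMonoid F] [ContinuousStar F]
    [StarModule ℝ F] {n : WithTop ℕ∞} {g : E → F} (hg : ContDiff ℝ n g) :
    ContDiff ℝ n (star g) :=
  (starL' ℝ : F ≃L[ℝ] F).contDiff.comp hg

section PartialDerivatives

variable (g : ℝ × ℝ → ℂ)

lemma pdxC_neg : pdxC (-g) = -pdxC g := by
  funext q; simp [pdxC, fderiv_neg]

lemma pdyC_neg : pdyC (-g) = -pdyC g := by
  funext q; simp [pdyC, fderiv_neg]

lemma pdxC_star : pdxC (star g) = star (pdxC g) := by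
  funext q
  change fderiv ℝ (fun p => star (g p)) q (1, 0) = star (fderiv ℝ g q (1, 0))
  rw [fderiv_star]
  rfl

lemma pdyC_star : pdyC (star g) = star (pdyC g) := by
  funext q
  change fderiv ℝ (fun p => star (g p)) q (0, 1) = star (fderiv ℝ g q (0, 1))
  rw [fderiv_star]
  rfl

variable {g}

lemma pdxC_add {h : ℝ × ℝ → ℂ} (hg : Differentiable ℝ g) (hh : Differentiable ℝ h) :
    pdxC (g + h) = pdxC g + pdxC h := by
  funext q; simp [pdxC, fderiv_add (hg q) (hh q)]

lemma pdyC_add {h : ℝ × ℝ → ℂ} (hg : Differentiable ℝ g) (hh : Differentiable ℝ h) :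
    pdyC (g + h) = pdyC g + pdyC h := by
  funext q; simp [pdyC, fderiv_add (hg q) (hh q)]

lemma ContDiff.pdxC {m n : WithTop ℕ∞} (hg : ContDiff ℝ m g) (hmn : n + 1 ≤ m) :
    ContDiff ℝ n (pdxC g) :=
  (hg.fderiv_right hmn).clm_apply contDiff_const

lemma ContDiff.pdyC {m n : WithTop ℕ∞} (hg : ContDiff ℝ m g) (hmn : n + 1 ≤ m) :
    ContDiff ℝ n (pdyC g) :=
  (hg.fderiv_right hmn).clm_apply contDiff_const

end PartialDerivatives

section Momentum

variable (hbar : ℝ) (g : ℝ × ℝ → ℂ)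

lemma P1_neg : P1 hbar (-g) = -P1 hbar g := by
  funext q; simp [P1, pdxC_neg]

lemma P2_neg : P2 hbar (-g) = -P2 hbar g := by
  funext q; simp [P2, pdyC_neg]

lemma P1_star : P1 hbar (star g) = -star (P1 hbar g) := by
  funext q; simp [P1, pdxC_star]

lemma P2_star : P2 hbar (star g) = -star (P2 hbar g) := by
  funext q; simp [P2, pdyC_star]

lemma P1_iterate_P2_iterate_star (j m : ℕ) :
    (P1 hbar)^[j] ((P2 hbar)^[m] (star g)) =
      (-1 : ℂ) ^ (j + m) • star ((P1 hbar)^[j] ((P2 hbar)^[m] g)) := by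
  have h2 := iterate_neg_one_pow_smul_star (R := ℂ) (P2_neg hbar) (P2_star hbar) m 0 g
  rw [pow_zero, one_smul, add_zero] at h2
  rw [h2, iterate_neg_one_pow_smul_star (P1_neg hbar) (P1_star hbar)]

variable {hbar g}

lemma contDiff_P1 (hg : ContDiff ℝ (⊤ : ℕ∞) g) : ContDiff ℝ (⊤ : ℕ∞) (P1 hbar g) :=
  contDiff_const.mul (hg.pdxC (by simp))

lemma contDiff_P2 (hg : ContDiff ℝ (⊤ : ℕ∞) g) : ContDiff ℝ (⊤ : ℕ∞) (P2 hbar g) :=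
  contDiff_const.mul (hg.pdyC (by simp))

lemma contDiff_P1_iterate (hg : ContDiff ℝ (⊤ : ℕ∞) g) (j : ℕ) :
    ContDiff ℝ (⊤ : ℕ∞) ((P1 hbar)^[j] g) := by
  induction j with
  | zero => exact hg
  | succ j ih => rw [iterate_succ_apply']; exact contDiff_P1 ih

lemma contDiff_P2_iterate (hg : ContDiff ℝ (⊤ : ℕ∞) g) (j : ℕ) :
    ContDiff ℝ (⊤ : ℕ∞) ((P2 hbar)^[j] g) := by
  induction j with
  | zero => exact hg
  | succ j ih => rw [iterate_succ_apply']; exact contDiff_P2 ih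

end Momentum

section Hamiltonian

variable (hbar : ℝ) (V : ℝ × ℝ → ℝ)

lemma Hop_neg (ψ : ℝ × ℝ → ℂ) : Hop hbar V (-ψ) = -Hop hbar V ψ := by
  funext q; simp only [Hop, pdxC_neg, pdyC_neg, Pi.neg_apply]; ring

lemma Hop_star (ψ : ℝ × ℝ → ℂ) : Hop hbar V (star ψ) = star (Hop hbar V ψ) := by
  funext q; simp [Hop, pdxC_star, pdyC_star]

variable {hbar} {u v : ℝ × ℝ → ℂ}

lemma Hop_add (hu : ContDiff ℝ 2 u) (hv : ContDiff ℝ 2 v) :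
    Hop hbar V (u + v) = Hop hbar V u + Hop hbar V v := by
  have hd : ∀ {w : ℝ × ℝ → ℂ}, ContDiff ℝ 2 w → Differentiable ℝ w :=
    fun hw => hw.differentiable (by norm_num)
  have hdx : ∀ {w : ℝ × ℝ → ℂ}, ContDiff ℝ 2 w → Differentiable ℝ (pdxC w) :=
    fun hw => (hw.pdxC (n := 1) (by norm_num)).differentiable one_ne_zero
  have hdy : ∀ {w : ℝ × ℝ → ℂ}, ContDiff ℝ 2 w → Differentiable ℝ (pdyC w) :=
    fun hw => (hw.pdyC (n := 1) (by norm_num)).differentiable one_ne_zero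
  funext q
  simp only [Hop, pdxC_add (hd hu) (hd hv), pdyC_add (hd hu) (hd hv),
    pdxC_add (hdx hu) (hdx hv), pdyC_add (hdy hu) (hdy hv), Pi.add_apply]
  ring

lemma Hop_sub (hu : ContDiff ℝ 2 u) (hv : ContDiff ℝ 2 v) :
    Hop hbar V (u - v) = Hop hbar V u - Hop hbar V v := by
  rw [sub_eq_add_neg, Hop_add V hu (v := -v) hv.neg, Hop_neg, sub_eq_add_neg]

end Hamiltonian

section SymmetrizedIntegral

variable {N : ℕ} {hbar : ℝ} {f : ℕ → ℕ → ℝ × ℝ → ℝ}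

lemma contDiff_XopS (hf : ∀ j k, ContDiff ℝ (⊤ : ℕ∞) (f j k)) (s : Finset ℕ)
    {ψ : ℝ × ℝ → ℂ} (hψ : ContDiff ℝ (⊤ : ℕ∞) ψ) :
    ContDiff ℝ (⊤ : ℕ∞) (XopS N hbar f s ψ) := by
  have hfC : ∀ j k, ContDiff ℝ (⊤ : ℕ∞) (fun p => (f j k p : ℂ)) :=
    fun j k => Complex.ofRealCLM.contDiff.comp (hf j k)
  refine contDiff_const.mul (.sum fun k _ => .sum fun j _ => .add ?_ ?_)
  · exact (hfC j k).mul (contDiff_P1_iterate (contDiff_P2_iterate hψ _) j)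
  · exact contDiff_P1_iterate (contDiff_P2_iterate ((hfC j k).mul hψ) _) j

lemma XopS_filter_add_filter_not (s : Finset ℕ) (p : ℕ → Prop) [DecidablePred p]
    (ψ : ℝ × ℝ → ℂ) :
    XopS N hbar f s ψ = XopS N hbar f (s.filter p) ψ + XopS N hbar f (s.filter (¬p ·)) ψ := by
  funext q
  simp only [XopS, Pi.add_apply, ← mul_add, Finset.sum_filter_add_sum_filter_not]

lemma XopS_star {s : Finset ℕ} {ε : ℂ}
    (hε : ∀ k ∈ s, (-1 : ℂ) ^ (N - k) = ε) (ψ : ℝ × ℝ → ℂ) :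
    XopS N hbar f s (star ψ) = ε • star (XopS N hbar f s ψ) := by
  funext q
  have hstar_mul : ∀ j k, (fun p => (f j k p : ℂ) * star (ψ p)) =
      star (fun p => (f j k p : ℂ) * ψ p) := fun j k => by
    funext p; simp
  rw [Pi.smul_apply, Pi.star_apply, smul_eq_mul]
  simp only [XopS, hstar_mul, P1_iterate_P2_iterate_star, Pi.smul_apply, Pi.star_apply,
    smul_eq_mul, star_mul', star_sum, Finset.mul_sum, star_add]
  refine Finset.sum_congr rfl fun k hk => Finset.sum_congr rfl fun j hj => ?_
  have hjk : j + (N - k - j) = N - k := Nat.add_sub_of_le (Finset.mem_range_succ_iff.mp hj)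
  rw [hjk, hε k hk]
  simp only [star_div₀, star_one, star_ofNat, Complex.star_def, Complex.conj_ofReal]
  ring

end SymmetrizedIntegral

section Commutation

variable {hbar : ℝ} {V : ℝ × ℝ → ℝ} {X A B : (ℝ × ℝ → ℂ) → ℝ × ℝ → ℂ}

def CommutesWithHop (hbar : ℝ) (V : ℝ × ℝ → ℝ)
    (X : (ℝ × ℝ → ℂ) → ℝ × ℝ → ℂ) : Prop :=
  ∀ ψ, ContDiff ℝ (⊤ : ℕ∞) ψ → X (Hop hbar V ψ) = Hop hbar V (X ψ)

lemma CommutesWithHop.star_conj (hX : CommutesWithHop hbar V X) :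
    CommutesWithHop hbar V (fun ψ => star (X (star ψ))) := fun ψ hψ => by
  dsimp only
  rw [← Hop_star, hX _ hψ.star, Hop_star]

lemma CommutesWithHop.neg_one_pow_smul (hX : CommutesWithHop hbar V X) (n : ℕ) :
    CommutesWithHop hbar V (fun ψ => (-1 : ℂ) ^ n • X ψ) := fun ψ hψ => by
  dsimp only
  rw [hX ψ hψ, map_neg_one_pow_smul (Hop_neg hbar V)]

lemma commutesWithHop_of_add_of_sub
    (hA : ∀ ψ, ContDiff ℝ (⊤ : ℕ∞) ψ → ContDiff ℝ 2 (A ψ))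
    (hB : ∀ ψ, ContDiff ℝ (⊤ : ℕ∞) ψ → ContDiff ℝ 2 (B ψ))
    (hadd : CommutesWithHop hbar V (A + B)) (hsub : CommutesWithHop hbar V (A - B)) :
    CommutesWithHop hbar V A ∧ CommutesWithHop hbar V B := by
  have key : ∀ ψ, ContDiff ℝ (⊤ : ℕ∞) ψ → ∀ q,
      A (Hop hbar V ψ) q = Hop hbar V (A ψ) q ∧ B (Hop hbar V ψ) q = Hop hbar V (B ψ) q := by
    intro ψ hψ q
    have hplus := congrFun (hadd ψ hψ) q
    have hminus := congrFun (hsub ψ hψ) q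
    simp only [Pi.add_apply, Pi.sub_apply, Hop_add V (hA ψ hψ) (hB ψ hψ),
      Hop_sub V (hA ψ hψ) (hB ψ hψ)] at hplus hminus
    exact ⟨by linear_combination (hplus + hminus) / 2,
      by linear_combination (hplus - hminus) / 2⟩
  exact ⟨fun ψ hψ => funext fun q => (key ψ hψ q).1,
    fun ψ hψ => funext fun q => (key ψ hψ q).2⟩

end Commutation

section Parity

variable {N : ℕ} {hbar : ℝ} {f : ℕ → ℕ → ℝ × ℝ → ℝ}

lemma XopS_range_eq_even_add_odd :
    XopS N hbar f (Finset.range (N + 1)) =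
      XopS N hbar f {k ∈ Finset.range (N + 1) | Even k} +
        XopS N hbar f {k ∈ Finset.range (N + 1) | Odd k} := by
  funext ψ
  rw [Pi.add_apply]
  simpa only [Nat.not_even_iff_odd] using
    XopS_filter_add_filter_not (Finset.range (N + 1)) (fun k => Even k) ψ

lemma XopS_even_sub_odd_eq_star_conj :
    XopS N hbar f {k ∈ Finset.range (N + 1) | Even k} -
        XopS N hbar f {k ∈ Finset.range (N + 1) | Odd k} =
      fun ψ => (-1 : ℂ) ^ N • star (XopS N hbar f (Finset.range (N + 1)) (star ψ)) := by
  funext ψ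
  have hE := XopS_star (hbar := hbar) (f := f) (ε := (-1 : ℂ) ^ N) (fun k hk =>
    have hk := Finset.mem_filter.mp hk
    neg_one_pow_sub_of_even (Finset.mem_range_succ_iff.mp hk.1) hk.2) ψ
  have hO := XopS_star (hbar := hbar) (f := f) (ε := -(-1 : ℂ) ^ N) (fun k hk =>
    have hk := Finset.mem_filter.mp hk
    neg_one_pow_sub_of_odd (Finset.mem_range_succ_iff.mp hk.1) hk.2) ψ
  have hstar : star ((-1 : ℂ) ^ N) = (-1) ^ N := by simp
  have hsq : (-1 : ℂ) ^ N * (-1) ^ N = 1 := by rw [← mul_pow]; norm_num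
  rw [XopS_range_eq_even_add_odd, Pi.add_apply, hE, hO, Pi.sub_apply]
  simp only [star_add, star_smul, star_neg, star_star, neg_smul, hstar, smul_add, smul_neg,
    smul_smul, hsq, one_smul, sub_eq_add_neg]

end Parity

theorem stmt_12_general (N : ℕ) (hbar : ℝ) (V : ℝ × ℝ → ℝ)
    (f : ℕ → ℕ → ℝ × ℝ → ℝ) (hf : ∀ j k, ContDiff ℝ (⊤ : ℕ∞) (f j k))
    (hcomm : ∀ ψ : ℝ × ℝ → ℂ, ContDiff ℝ (⊤ : ℕ∞) ψ → ∀ q : ℝ × ℝ,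
      XopS N hbar f (Finset.range (N + 1)) (Hop hbar V ψ) q =
        Hop hbar V (XopS N hbar f (Finset.range (N + 1)) ψ) q) :
    (∀ ψ : ℝ × ℝ → ℂ, ContDiff ℝ (⊤ : ℕ∞) ψ → ∀ q : ℝ × ℝ,
        XopS N hbar f ((Finset.range (N + 1)).filter (fun k => Even k)) (Hop hbar V ψ) q =
          Hop hbar V (XopS N hbar f ((Finset.range (N + 1)).filter (fun k => Even k)) ψ) q) ∧
    (∀ ψ : ℝ × ℝ → ℂ, ContDiff ℝ (⊤ : ℕ∞) ψ → ∀ q : ℝ × ℝ,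
        XopS N hbar f ((Finset.range (N + 1)).filter (fun k => Odd k)) (Hop hbar V ψ) q =
          Hop hbar V (XopS N hbar f ((Finset.range (N + 1)).filter (fun k => Odd k)) ψ) q) := by
  have hX : CommutesWithHop hbar V (XopS N hbar f (Finset.range (N + 1))) :=
    fun ψ hψ => funext (hcomm ψ hψ)
  have hsmooth : ∀ s ψ, ContDiff ℝ (⊤ : ℕ∞) ψ → ContDiff ℝ 2 (XopS N hbar f s ψ) :=
    fun s ψ hψ => (contDiff_XopS hf s hψ).of_le (WithTop.coe_le_coe.mpr le_top)
  obtain ⟨hE, hO⟩ := commutesWithHop_of_add_of_sub (hsmooth _) (hsmooth _)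
    (XopS_range_eq_even_add_odd ▸ hX)
    (XopS_even_sub_odd_eq_star_conj ▸ hX.star_conj.neg_one_pow_smul N)
  exact ⟨fun ψ hψ => congrFun (hE ψ hψ), fun ψ hψ => congrFun (hO ψ hψ)⟩

/-- if the symmetrized quantum integral `X = X^e + X^o` commutes with `Ĥ`
on smooth functions, then the even part `X^e` (sum over even `k`) and the odd part `X^o`
(sum over odd `k`) each commute with `Ĥ`. -/
theorem stmt_12 (N : ℕ) (hN : 1 ≤ N) (hbar : ℝ) (hb : hbar ≠ 0)
    (V : ℝ × ℝ → ℝ) (hV : ContDiff ℝ (⊤ : ℕ∞) V)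
    (f : ℕ → ℕ → ℝ × ℝ → ℝ) (hf : ∀ j k, ContDiff ℝ (⊤ : ℕ∞) (f j k))
    (hcomm : ∀ ψ : ℝ × ℝ → ℂ, ContDiff ℝ (⊤ : ℕ∞) ψ → ∀ q : ℝ × ℝ,
      XopS N hbar f (Finset.range (N + 1)) (Hop hbar V ψ) q =
        Hop hbar V (XopS N hbar f (Finset.range (N + 1)) ψ) q) :
    (∀ ψ : ℝ × ℝ → ℂ, ContDiff ℝ (⊤ : ℕ∞) ψ → ∀ q : ℝ × ℝ,
        XopS N hbar f ((Finset.range (N + 1)).filter (fun k => Even k)) (Hop hbar V ψ) q =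
          Hop hbar V (XopS N hbar f ((Finset.range (N + 1)).filter (fun k => Even k)) ψ) q) ∧
    (∀ ψ : ℝ × ℝ → ℂ, ContDiff ℝ (⊤ : ℕ∞) ψ → ∀ q : ℝ × ℝ,
        XopS N hbar f ((Finset.range (N + 1)).filter (fun k => Odd k)) (Hop hbar V ψ) q =
          Hop hbar V (XopS N hbar f ((Finset.range (N + 1)).filter (fun k => Odd k)) ψ) q) :=
  stmt_12_general N hbar V f hf hcomm
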